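/- arXiv:1408.2776 — 4 statements merged into one kernel-verified Lean document; each statement's English description precedes it below -/
import Mathlib

section
/- Let F be a field, σ₀ a ring automorphism of F, α ∈ F∖{0}, and let σ be the field automorphism of the rational function field F(t) with σ(a) = σ₀(a) for a ∈ F and σ(t) = α·t. Then const(F(t), σ) = const(F, σ₀) (every σ-invariant rational function lies in F and is σ₀-invariant) if and only if there exist no g ∈ F∖{0} and integer m > 0 with σ₀(g) = α^m·g. -/
/-!
Write a `σ`-invariant `r` as `p / q` in lowest terms with `q` monic of degree `d`, and let `τ` be
the restriction of `σ` to `F[X]`. Invariance gives `τ p * q = p * τ q`, so `q ∣ τ q`; since `τ`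
does not raise degrees and multiplies the leading coefficient of `q` by `α ^ d`, `τ q = α ^ d q`
and then `τ p = α ^ d p`. For `f = p, q` this reads `σ₀ fₙ * α ^ n = α ^ d * fₙ`, so a nonzero
coefficient `fₙ` with `n ≠ d` gives `σ₀ g = α ^ |d - n| g` for `g = fₙ` or its inverse. Without
such `g`, `p` and `q` are monomials of degree `d` and `r` is a `σ₀`-invariant constant.
Conversely, `σ₀ g = α ^ m g` makes `g⁻¹ t ^ m` a nonconstant invariant.
-/

open Polynomial

namespace Polynomial

section CommSemiring

variable {R : Type*} [CommSemiring R] (σ₀ : R →+* R) (α : R)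

/-- `f(t) ↦ f^σ₀(α t)`: the restriction to polynomials of the automorphism `σ` of the theorem. -/
noncomputable def twist : R[X] →+* R[X] :=
  (compRingHom (C α * X)).comp (mapRingHom σ₀)

variable {σ₀ α}

@[simp]
lemma coeff_twist (f : R[X]) (n : ℕ) : (twist σ₀ α f).coeff n = σ₀ (f.coeff n) * α ^ n := by
  simp [twist]

lemma natDegree_twist_le (f : R[X]) : (twist σ₀ α f).natDegree ≤ f.natDegree :=
  natDegree_le_iff_coeff_eq_zero.mpr fun n hn => by
    rw [coeff_twist, coeff_eq_zero_of_natDegree_lt hn, map_zero, zero_mul]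

lemma twist_eq_of_monic_of_dvd {q : R[X]} (hq : q.Monic) (hdvd : q ∣ twist σ₀ α q) :
    twist σ₀ α q = C (α ^ q.natDegree) * q := by
  have hlead := eq_leadingCoeff_mul_of_monic_of_dvd_of_natDegree_le hq hdvd
    (natDegree_twist_le q)
  have hcoeff := congrArg (coeff · q.natDegree) hlead
  simp only [coeff_twist, coeff_C_mul, hq.coeff_natDegree, map_one, one_mul, mul_one] at hcoeff
  rwa [← hcoeff] at hlead

end CommSemiring

variable {F : Type*} [Field F] {σ₀ : F →+* F} {α : F}

lemma exists_pow_mul_of_zpow_mul {x : F} (hx : x ≠ 0) {k : ℤ} (hk : k ≠ 0)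
    (h : σ₀ x = α ^ k * x) : ∃ (g : F) (m : ℕ), g ≠ 0 ∧ 0 < m ∧ σ₀ g = α ^ m * g := by
  obtain ⟨m, rfl | rfl⟩ := k.eq_nat_or_neg
  · exact ⟨x, m, hx, by omega, by simpa using h⟩
  · refine ⟨x⁻¹, m, inv_ne_zero hx, by omega, ?_⟩
    rw [map_inv₀, h, zpow_neg, zpow_natCast, mul_inv, inv_inv]

lemma eq_C_mul_X_pow_of_twist_eq (hα : α ≠ 0)
    (hno : ¬ ∃ (g : F) (m : ℕ), g ≠ 0 ∧ 0 < m ∧ σ₀ g = α ^ m * g)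
    {f : F[X]} {d : ℕ} (hf : twist σ₀ α f = C (α ^ d) * f) :
    f = C (f.coeff d) * X ^ d := by
  ext n
  rw [coeff_C_mul_X_pow]
  split_ifs with hnd
  · rw [hnd]
  by_contra hfn
  have hcoeff : σ₀ (f.coeff n) * α ^ n = α ^ d * f.coeff n := by
    rw [← coeff_twist, hf, coeff_C_mul]
  refine hno (exists_pow_mul_of_zpow_mul hfn (k := (d : ℤ) - n) (by omega) ?_)
  rw [zpow_sub₀ hα, zpow_natCast, zpow_natCast, div_mul_eq_mul_div, ← hcoeff,
    mul_div_cancel_right₀ _ (pow_ne_zero n hα)]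

lemma map_coeff_of_twist_eq (hα : α ≠ 0) {f : F[X]} {d : ℕ}
    (hf : twist σ₀ α f = C (α ^ d) * f) : σ₀ (f.coeff d) = f.coeff d := by
  have hcoeff := congrArg (coeff · d) hf
  simp only [coeff_twist, coeff_C_mul, mul_comm (α ^ d)] at hcoeff
  exact mul_right_cancel₀ (pow_ne_zero d hα) hcoeff

end Polynomial

namespace RatFunc

variable {F : Type*} [Field F] {σ₀ : F →+* F} {α : F}

lemma C_mul_X_pow_ne_C {a : F} (ha : a ≠ 0) {m : ℕ} (hm : 0 < m) (c : F) :
    C a * X ^ m ≠ C c := by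
  intro h
  have hdeg := congrArg intDegree h
  rw [← algebraMap_C, ← algebraMap_X, ← map_pow, ← map_mul, intDegree_polynomial,
    natDegree_C_mul_X_pow m a ha, intDegree_C] at hdeg
  omega

variable {σ : RatFunc F →+* RatFunc F}

lemma map_C_inv_mul_X_pow (hC : ∀ a : F, σ (C a) = C (σ₀ a)) (hX : σ X = C α * X)
    {g : F} (hg : g ≠ 0) {m : ℕ} (hσg : σ₀ g = α ^ m * g) :
    σ (C g⁻¹ * X ^ m) = C g⁻¹ * X ^ m := by
  have hαm : α ^ m ≠ 0 := left_ne_zero_of_mul (hσg ▸ (map_ne_zero σ₀).mpr hg)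
  rw [map_mul, map_pow, hX, hC, map_inv₀, hσg, mul_pow, ← map_pow, ← mul_assoc, ← map_mul,
    mul_inv_rev, inv_mul_cancel_right₀ hαm]

lemma map_algebraMap_eq_twist (hC : ∀ a : F, σ (C a) = C (σ₀ a)) (hX : σ X = C α * X) (f : F[X]) :
    σ (algebraMap F[X] (RatFunc F) f) = algebraMap F[X] (RatFunc F) (twist σ₀ α f) := by
  suffices σ.comp (algebraMap F[X] (RatFunc F)) =
      (algebraMap F[X] (RatFunc F)).comp (twist σ₀ α) from RingHom.congr_fun this f
  refine Polynomial.ringHom_ext (fun a => ?_) ?_ <;>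
    simp [twist, algebraMap_C, algebraMap_X, hC, hX]

lemma twist_num_mul_denom (hC : ∀ a : F, σ (C a) = C (σ₀ a)) (hX : σ X = C α * X)
    {r : RatFunc F} (hr : σ r = r) :
    twist σ₀ α r.num * r.denom = r.num * twist σ₀ α r.denom := by
  have hrq : r * algebraMap F[X] (RatFunc F) r.denom = algebraMap F[X] (RatFunc F) r.num :=
    (eq_div_iff (algebraMap_ne_zero r.denom_ne_zero)).mp (num_div_denom r).symm
  have hσrq := congrArg σ hrq
  rw [map_mul, hr, map_algebraMap_eq_twist hC hX, map_algebraMap_eq_twist hC hX] at hσrq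
  apply algebraMap_injective F
  rw [map_mul, map_mul, ← hσrq, ← hrq]
  ring

lemma eq_C_of_map_eq_self (hC : ∀ a : F, σ (C a) = C (σ₀ a)) (hX : σ X = C α * X) (hα : α ≠ 0)
    (hno : ¬ ∃ (g : F) (m : ℕ), g ≠ 0 ∧ 0 < m ∧ σ₀ g = α ^ m * g)
    {r : RatFunc F} (hr : σ r = r) : ∃ c : F, σ₀ c = c ∧ r = C c := by
  set p := r.num
  set q := r.denom
  set d := q.natDegree
  have hpq := twist_num_mul_denom hC hX hr
  have hq : twist σ₀ α q = Polynomial.C (α ^ d) * q :=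
    twist_eq_of_monic_of_dvd r.monic_denom
      (r.isCoprime_num_denom.symm.dvd_of_dvd_mul_left ⟨twist σ₀ α p, by rw [← hpq, mul_comm]⟩)
  have hp : twist σ₀ α p = Polynomial.C (α ^ d) * p := by
    refine mul_right_cancel₀ r.denom_ne_zero ?_
    rw [hpq, hq]
    ring
  have hqX : q = Polynomial.X ^ d := by
    rw [eq_C_mul_X_pow_of_twist_eq hα hno hq, r.monic_denom.coeff_natDegree, map_one, one_mul]
  set c := p.coeff d
  have hpX : p = Polynomial.C c * Polynomial.X ^ d := eq_C_mul_X_pow_of_twist_eq hα hno hp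
  refine ⟨c, map_coeff_of_twist_eq hα hp, ?_⟩
  calc r = algebraMap F[X] (RatFunc F) p / algebraMap F[X] (RatFunc F) q :=
        (num_div_denom r).symm
    _ = C c := by
      rw [hpX, hqX, map_mul, map_pow, algebraMap_C, algebraMap_X,
        mul_div_cancel_right₀ _ (pow_ne_zero _ X_ne_zero)]

end RatFunc

theorem stmt_12_general {F : Type*} [Field F]
    (σ₀ : F ≃+* F) (α : F) (hα : α ≠ 0)
    (σ : RatFunc F ≃+* RatFunc F)
    (hC : ∀ a : F, σ (RatFunc.C a) = RatFunc.C (σ₀ a))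
    (hX : σ RatFunc.X = RatFunc.C α * RatFunc.X) :
    (∀ r : RatFunc F, σ r = r → ∃ c : F, σ₀ c = c ∧ r = RatFunc.C c)
      ↔ ¬ ∃ (g : F) (m : ℕ), g ≠ 0 ∧ 0 < m ∧ σ₀ g = α ^ m * g := by
  constructor
  · rintro hconst ⟨g, m, hg, hm, hσg⟩
    obtain ⟨c, -, hc⟩ := hconst _ (RatFunc.map_C_inv_mul_X_pow (σ₀ := σ₀) (σ := σ) hC hX hg hσg)
    exact RatFunc.C_mul_X_pow_ne_C (inv_ne_zero hg) hm c hc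
  · exact fun hno r hr => RatFunc.eq_C_of_map_eq_self (σ₀ := σ₀) (σ := σ) hC hX hα hno hr

/-- Let `F` be a field of characteristic zero, `σ₀` an
automorphism of `F`, `α ∈ F∖{0}`, and `σ` the automorphism of `F(t)` extending
`σ₀` with `σ(t) = α·t`.  Then `const(F(t), σ) = const(F, σ₀)` iff there are no
`g ∈ F∖{0}` and integer `m > 0` with `σ₀(g) = α^m·g`. -/
theorem stmt_12 {F : Type*} [Field F] [CharZero F]
    (σ₀ : F ≃+* F) (α : F) (hα : α ≠ 0)
    (σ : RatFunc F ≃+* RatFunc F)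
    (hC : ∀ a : F, σ (RatFunc.C a) = RatFunc.C (σ₀ a))
    (hX : σ RatFunc.X = RatFunc.C α * RatFunc.X) :
    (∀ r : RatFunc F, σ r = r → ∃ c : F, σ₀ c = c ∧ r = RatFunc.C c)
      ↔ ¬ ∃ (g : F) (m : ℕ), g ≠ 0 ∧ 0 < m ∧ σ₀ g = α ^ m * g :=
  stmt_12_general σ₀ α hα σ hC hX
end

section
/- Let (A, σ) be a difference ring and let G be a subgroup of the unit group Aˣ such that every nonzero element c ∈ A satisfying σ(c) = u·c for some u ∈ G is a unit of A. Let σ' be the ring automorphism of the Laurent polynomial ring A[t,t⁻¹] with σ'|_A = σ and σ'(t) = α·t for some α ∈ G, and assume this is a Π-extension, i.e., const(A[t,t⁻¹], σ') = const(A, σ). Then sconst_G(A[t,t⁻¹], σ') = {h·t^m : h ∈ sconst_G(A,σ), m ∈ ℤ}, i.e., a Laurent polynomial p satisfies σ'(p) = u·p for some u ∈ G exactly when p = h·t^m with σ(h) = v·h for some v ∈ G and m ∈ ℤ; moreover every nonzero such p is a unit of A[t,t⁻¹]. -/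
/-! If `σ' p = u p` with `p ≠ 0`, comparing coefficients gives `σ pₙ = u α⁻ⁿ pₙ`, so every nonzero
coefficient `pₙ` is a semi-constant over `G`, hence a unit. Then `pₙ tⁿ` is a unit with the same
eigenvalue `u` as `p`, so `p / (pₙ tⁿ)` is fixed by `σ'`; by the Π-extension hypothesis it is a
constant, and comparing `n`-th coefficients shows that it is `1`. -/

open LaurentPolynomial

namespace LaurentPolynomial

variable {A : Type*} [CommRing A] {σ : A →+* A} {f : A[T;T⁻¹] →+* A[T;T⁻¹]} {α : Aˣ}

lemma coeff_C_mul (a : A) (p : A[T;T⁻¹]) (k : ℤ) : (C a * p).coeff k = a * p.coeff k := by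
  simp [← smul_eq_C_mul]

lemma coeff_C_mul_T_self (a : A) (n : ℤ) : (C a * T n).coeff n = a := by
  simp [← single_eq_C_mul_T]

/-- `n ↦ T n` and `n ↦ C (α ^ n) * T n` are monoid homomorphisms out of `Multiplicative ℤ`,
so they agree once they agree at `1`. -/
lemma apply_T_of_apply_T_one (hT : f (T 1) = C (α : A) * T 1) (n : ℤ) :
    f (T n) = C ((α ^ n : Aˣ) : A) * T n := by
  have hom_eq := MonoidHom.ext_mint
    (f := f.toMonoidHom.comp (AddMonoidAlgebra.of A ℤ))
    (g := C.toMonoidHom.comp ((Units.coeHom A).comp (zpowersHom Aˣ α)) *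
      AddMonoidAlgebra.of A ℤ)
    (by simpa [AddMonoidAlgebra.of_apply] using hT)
  simpa [AddMonoidAlgebra.of_apply] using DFunLike.congr_fun hom_eq (Multiplicative.ofAdd n)

lemma apply_C_mul_T (hC : ∀ a, f (C a) = C (σ a)) (hT : f (T 1) = C (α : A) * T 1) (a : A)
    (n : ℤ) : f (C a * T n) = C (σ a * ((α ^ n : Aˣ) : A)) * T n := by
  rw [map_mul, hC, apply_T_of_apply_T_one hT, ← mul_assoc, ← map_mul]

lemma coeff_apply_of_apply_C (hC : ∀ a, f (C a) = C (σ a)) (hT : f (T 1) = C (α : A) * T 1)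
    (p : A[T;T⁻¹]) (k : ℤ) : (f p).coeff k = σ (p.coeff k) * ((α ^ k : Aˣ) : A) := by
  induction p using LaurentPolynomial.induction_on' with
  | add p q hp hq => simp [hp, hq, add_mul]
  | C_mul_T n a =>
    rw [apply_C_mul_T hC hT]
    simp only [← single_eq_C_mul_T, AddMonoidAlgebra.coeff_single, Finsupp.single_apply]
    by_cases h : n = k <;> simp [h]

lemma apply_C_mul_T_of_apply_eq_mul (hC : ∀ a, f (C a) = C (σ a))
    (hT : f (T 1) = C (α : A) * T 1) {a : A} {v : Aˣ} (ha : σ a = v * a) (n : ℤ) :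
    f (C a * T n) = C ((v * α ^ n : Aˣ) : A) * (C a * T n) := by
  rw [apply_C_mul_T hC hT, ha, Units.val_mul, mul_right_comm, ← mul_assoc, ← map_mul]

lemma apply_coeff_of_apply_eq_C_mul (hC : ∀ a, f (C a) = C (σ a))
    (hT : f (T 1) = C (α : A) * T 1) {p : A[T;T⁻¹]} {u : Aˣ} (hp : f p = C (u : A) * p)
    (k : ℤ) : σ (p.coeff k) = ((u * (α ^ k)⁻¹ : Aˣ) : A) * p.coeff k := by
  have hk := congr_arg (·.coeff k) hp
  simp only [coeff_apply_of_apply_C hC hT, coeff_C_mul] at hk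
  rw [← Units.eq_mul_inv_iff_mul_eq] at hk
  rw [hk, Units.val_mul]
  ring

lemma eq_C_coeff_mul_T_of_apply_eq_C_mul (hC : ∀ a, f (C a) = C (σ a))
    (hT : f (T 1) = C (α : A) * T 1) (hfix : ∀ p, f p = p → ∃ c, p = C c)
    {p : A[T;T⁻¹]} {u : Aˣ} (hp : f p = C (u : A) * p) {n : ℤ} (hn : IsUnit (p.coeff n)) :
    p = C (p.coeff n) * T n := by
  have hσ := apply_coeff_of_apply_eq_C_mul hC hT hp n
  generalize hw : p.coeff n = w at hn hσ ⊢
  have hq : IsUnit (C w * T n) := (hn.map C).mul (isUnit_T n)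
  have hfq : f (C w * T n) = C (u : A) * (C w * T n) := by
    simpa using apply_C_mul_T_of_apply_eq_mul hC hT hσ n
  obtain ⟨r, hr⟩ : ∃ r, p = C w * T n * r :=
    ⟨hq.unit⁻¹ * p, by rw [← mul_assoc, hq.mul_val_inv, one_mul]⟩
  have hfr : f r = r := by
    have h : C (u : A) * (C w * T n) * f r = C (u : A) * (C w * T n) * r :=
      calc C (u : A) * (C w * T n) * f r = f (C w * T n * r) := by rw [← hfq, ← map_mul]
        _ = C (u : A) * (C w * T n) * r := by rw [← hr, hp, hr, ← mul_assoc]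
    exact ((u.isUnit.map C).mul hq).mul_left_cancel h
  obtain ⟨c, rfl⟩ := hfix r hfr
  have hc : c = 1 := by
    have h := congr_arg (·.coeff n) hr
    simp only [mul_right_comm _ (T n), ← map_mul, coeff_C_mul_T_self] at h
    exact hn.mul_eq_left.mp (h.symm.trans hw)
  rw [hr, hc, map_one, mul_one]

lemma exists_eq_C_mul_T_of_apply_eq_C_mul (hC : ∀ a, f (C a) = C (σ a))
    (hT : f (T 1) = C (α : A) * T 1) (hfix : ∀ p, f p = p → ∃ c, p = C c) {G : Subgroup Aˣ}
    (hG : ∀ c : A, c ≠ 0 → (∃ u ∈ G, σ c = (u : A) * c) → IsUnit c) (hαG : α ∈ G)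
    {p : A[T;T⁻¹]} (hp0 : p ≠ 0) {u : Aˣ} (huG : u ∈ G) (hp : f p = C (u : A) * p) :
    ∃ (h : Aˣ) (m : ℤ), (∃ v ∈ G, σ h = (v : A) * h) ∧ p = C (h : A) * T m := by
  obtain ⟨n, hn⟩ : ∃ n, p.coeff n ≠ 0 := by
    by_contra! h
    exact hp0 (LaurentPolynomial.ext h)
  have hσ := apply_coeff_of_apply_eq_C_mul hC hT hp n
  have hv : u * (α ^ n)⁻¹ ∈ G := mul_mem huG (inv_mem (zpow_mem hαG n))
  obtain ⟨h, hh⟩ := hG _ hn ⟨_, hv, hσ⟩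
  refine ⟨h, n, ⟨_, hv, hh ▸ hσ⟩, ?_⟩
  rw [hh]
  exact eq_C_coeff_mul_T_of_apply_eq_C_mul hC hT hfix hp (hh ▸ h.isUnit)

end LaurentPolynomial

theorem stmt_13_general {A : Type*} [CommRing A]
    (σ : A ≃+* A) (G : Subgroup Aˣ)
    (hG : ∀ c : A, c ≠ 0 → (∃ u ∈ G, σ c = (u : A) * c) → IsUnit c)
    (α : Aˣ) (hαG : α ∈ G)
    (σ' : LaurentPolynomial A ≃+* LaurentPolynomial A)
    (hC : ∀ a : A, σ' (LaurentPolynomial.C a) = LaurentPolynomial.C (σ a))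
    (hT : σ' (LaurentPolynomial.T 1) = LaurentPolynomial.C (α : A) * LaurentPolynomial.T 1)
    (hPi : ∀ p : LaurentPolynomial A, σ' p = p → ∃ c : A, σ c = c ∧ p = LaurentPolynomial.C c) :
    ∀ p : LaurentPolynomial A,
      ((∃ u ∈ G, σ' p = LaurentPolynomial.C (u : A) * p)
        ↔ ∃ (h : A) (m : ℤ), (∃ v ∈ G, σ h = (v : A) * h) ∧
            p = LaurentPolynomial.C h * LaurentPolynomial.T m)
      ∧ (p ≠ 0 → (∃ u ∈ G, σ' p = LaurentPolynomial.C (u : A) * p) → IsUnit p) := by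
  have hfix (p) (hp : σ' p = p) : ∃ c, p = C c := (hPi p hp).imp fun _ => And.right
  have normal_form :=
    @exists_eq_C_mul_T_of_apply_eq_C_mul _ _ σ.toRingHom σ'.toRingHom α hC hT hfix G hG hαG
  intro p
  refine ⟨⟨fun ⟨u, huG, hp⟩ => ?_, ?_⟩, fun hp0 ⟨u, huG, hp⟩ => ?_⟩
  · by_cases hp0 : p = 0
    · exact ⟨0, 0, ⟨1, G.one_mem, by simp⟩, by simp [hp0]⟩
    · obtain ⟨h, m, hh, rfl⟩ := normal_form hp0 huG hp
      exact ⟨h, m, hh, rfl⟩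
  · rintro ⟨h, m, ⟨v, hvG, hσh⟩, rfl⟩
    refine ⟨v * α ^ m, mul_mem hvG (zpow_mem hαG m), ?_⟩
    exact apply_C_mul_T_of_apply_eq_mul (f := σ'.toRingHom) (σ := σ.toRingHom) hC hT hσh m
  · obtain ⟨h, m, -, rfl⟩ := normal_form hp0 huG hp
    exact (h.isUnit.map C).mul (isUnit_T m)

/-- Let `(A, σ)` be a difference ring and `G ≤ Aˣ` with every
nonzero semi-constant over `G` a unit.  Let `σ'` on `A[t,t⁻¹]` extend `σ` with
`σ'(t) = α·t` for some `α ∈ G`, and assume it is a Π-extension.  Then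
`sconst_G(A[t,t⁻¹], σ') = {h·t^m : h ∈ sconst_G(A,σ), m ∈ ℤ}`, and every nonzero
semi-constant over `G` in `A[t,t⁻¹]` is a unit. -/
theorem stmt_13 {A : Type*} [CommRing A] [CharZero A]
    (σ : A ≃+* A) (G : Subgroup Aˣ)
    (hG : ∀ c : A, c ≠ 0 → (∃ u ∈ G, σ c = (u : A) * c) → IsUnit c)
    (α : Aˣ) (hαG : α ∈ G)
    (σ' : LaurentPolynomial A ≃+* LaurentPolynomial A)
    (hC : ∀ a : A, σ' (LaurentPolynomial.C a) = LaurentPolynomial.C (σ a))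
    (hT : σ' (LaurentPolynomial.T 1) = LaurentPolynomial.C (α : A) * LaurentPolynomial.T 1)
    (hPi : ∀ p : LaurentPolynomial A, σ' p = p → ∃ c : A, σ c = c ∧ p = LaurentPolynomial.C c) :
    ∀ p : LaurentPolynomial A,
      ((∃ u ∈ G, σ' p = LaurentPolynomial.C (u : A) * p)
        ↔ ∃ (h : A) (m : ℤ), (∃ v ∈ G, σ h = (v : A) * h) ∧
            p = LaurentPolynomial.C h * LaurentPolynomial.T m)
      ∧ (p ≠ 0 → (∃ u ∈ G, σ' p = LaurentPolynomial.C (u : A) * p) → IsUnit p) :=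
  stmt_13_general σ G hG α hαG σ' hC hT hPi
end

section
/- Let (A, σ) be a difference ring and let G be a subgroup of the unit group Aˣ such that every nonzero element c ∈ A satisfying σ(c) = u·c for some u ∈ G is a unit of A. Let σ' be the ring automorphism of A[t,t⁻¹] with σ'|_A = σ and σ'(t) = α·t for some α ∈ G, and assume this is a Π-extension (const(A[t,t⁻¹], σ') = const(A, σ)). Let G̃ = {h·t^m : h ∈ G, m ∈ ℤ}, a subgroup of A[t,t⁻¹]ˣ. Then sconst_{G̃}(A[t,t⁻¹], σ') = sconst_G(A[t,t⁻¹], σ') = {h·t^m : h ∈ sconst_G(A,σ), m ∈ ℤ}; that is, a Laurent polynomial p satisfies σ'(p) = w·p for some w ∈ G̃ if and only if p = h·t^m for some m ∈ ℤ and h ∈ A with σ(h) = v·h for some v ∈ G. -/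
/-!
`σ'` acts on coefficients by `p_n ↦ σ(p_n) αⁿ`, so it preserves the support of `p`, whereas
multiplying by `h tᵐ` translates the support by `m`; a nonempty finite set of integers is
invariant under translation by `m` only if `m = 0`. If `σ' p = u p` with `p ≠ 0`, pick
`p_N ≠ 0`: it is semi-constant, hence a unit, so `q = p_N t^N` is a unit of `A[t,t⁻¹]` with
`σ' q = u q`. Then `p / q` is fixed by `σ'`, and the Π-extension property makes it a constant
of `(A, σ)`.
-/

open LaurentPolynomial

theorem Finset.eq_zero_of_forall_mem_iff_sub_mem {M : Type*} [AddCommGroup M] [LinearOrder M]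
    [IsOrderedAddMonoid M] {S : Finset M} (hS : S.Nonempty) {m : M}
    (h : ∀ n, n ∈ S ↔ n - m ∈ S) : m = 0 := by
  have hle : S.max' hS + m ≤ S.max' hS :=
    S.le_max' _ ((h _).2 (by simpa using S.max'_mem hS))
  have hge : S.min' hS ≤ S.min' hS + m :=
    S.min'_le _ ((h _).2 (by simpa using S.min'_mem hS))
  exact le_antisymm (by simpa using hle) (by simpa using hge)

theorem exists_eq_fixed_mul_of_map_eq_mul {M F : Type*} [CommMonoid M] [FunLike F M M]
    [MonoidHomClass F M M] (f : F) {w p q : M} (hq : IsUnit q) (hp : f p = w * p)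
    (hfq : f q = w * q) : ∃ r, f r = r ∧ p = r * q := by
  obtain ⟨q, rfl⟩ := hq
  have hinv : w * f ↑q⁻¹ = ↑q⁻¹ := by
    refine (Units.inv_eq_of_mul_eq_one_left ?_).symm
    rw [mul_right_comm, ← hfq, ← map_mul, q.mul_inv, map_one]
  refine ⟨p * ↑q⁻¹, ?_, by simp⟩
  rw [map_mul, hp, mul_comm w, mul_assoc, hinv]

namespace LaurentPolynomial

theorem coeff_C_mul_T {R : Type*} [Semiring R] (a : R) (k n : ℤ) :
    (C a * T k : R[T;T⁻¹]).coeff n = if k = n then a else 0 := by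
  rw [← single_eq_C_mul_T]; exact Finsupp.single_apply

theorem coeff_C_mul_T_mul {R : Type*} [Semiring R] (a : R) (m : ℤ) (p : R[T;T⁻¹]) (n : ℤ) :
    (C a * T m * p).coeff n = a * p.coeff (n - m) := by
  rw [← single_eq_C_mul_T, AddMonoidAlgebra.coeff_single_mul_apply, neg_add_eq_sub]

variable {A : Type*} [CommRing A] {σ : A →+* A} {α : Aˣ} {σ' : A[T;T⁻¹] →+* A[T;T⁻¹]}

theorem map_T_of_map_T_one (hT : σ' (T 1) = C (α : A) * T 1) (n : ℤ) :
    σ' (T n) = C ((α ^ n : Aˣ) : A) * T n := by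
  have hTinv : σ' (T (-1)) = C ((α⁻¹ : Aˣ) : A) * T (-1) := by
    have hunit : C (α : A) * T 1 * (C ((α⁻¹ : Aˣ) : A) * T (-1)) = 1 := by
      rw [mul_mul_mul_comm, ← map_mul, ← T_add, α.mul_inv]; simp [T_zero]
    calc σ' (T (-1)) = σ' (T (-1)) * (C (α : A) * T 1) * (C ((α⁻¹ : Aˣ) : A) * T (-1)) := by
          rw [mul_assoc, hunit, mul_one]
      _ = C ((α⁻¹ : Aˣ) : A) * T (-1) := by
          rw [← hT, ← map_mul, ← T_add]; simp [T_zero]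
  induction n using Int.induction_on with
  | zero => simp [T_zero]
  | succ n ih => rw [T_add, map_mul, ih, hT, zpow_add_one, Units.val_mul, map_mul]; ring
  | pred n ih => rw [T_sub, map_mul, ih, hTinv, zpow_sub_one, Units.val_mul, map_mul]; ring

theorem map_C_mul_T_of_map_C_of_map_T_one (hC : ∀ a, σ' (C a) = C (σ a))
    (hT : σ' (T 1) = C (α : A) * T 1) (a : A) (n : ℤ) :
    σ' (C a * T n) = C (σ a * ((α ^ n : Aˣ) : A)) * T n := by
  rw [map_mul, hC, map_T_of_map_T_one hT, map_mul, mul_assoc]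

theorem coeff_map_of_map_C_of_map_T_one (hC : ∀ a, σ' (C a) = C (σ a))
    (hT : σ' (T 1) = C (α : A) * T 1) (p : A[T;T⁻¹]) (n : ℤ) :
    (σ' p).coeff n = σ (p.coeff n) * ((α ^ n : Aˣ) : A) := by
  induction p using LaurentPolynomial.induction_on' with
  | add p q hp hq => simp [hp, hq, add_mul]
  | C_mul_T k a =>
    rw [map_C_mul_T_of_map_C_of_map_T_one hC hT, coeff_C_mul_T, coeff_C_mul_T]
    split_ifs with hk
    · rw [hk]
    · rw [map_zero, zero_mul]

theorem eq_zero_of_map_eq_C_mul_T_mul (hσ : Function.Injective σ)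
    (hC : ∀ a, σ' (C a) = C (σ a)) (hT : σ' (T 1) = C (α : A) * T 1) {p : A[T;T⁻¹]}
    (hp : p ≠ 0) {u : Aˣ} {m : ℤ} (h : σ' p = C (u : A) * T m * p) : m = 0 := by
  refine Finset.eq_zero_of_forall_mem_iff_sub_mem (S := p.coeff.support) ?_ fun n => ?_
  · exact Finsupp.support_nonempty_iff.2 fun h0 => hp (ext fun n => by simp [h0])
  · have hn : σ (p.coeff n) * ((α ^ n : Aˣ) : A) = u * p.coeff (n - m) := by
      rw [← coeff_map_of_map_C_of_map_T_one hC hT, h, coeff_C_mul_T_mul]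
    rw [Finsupp.mem_support_iff, Finsupp.mem_support_iff, ne_eq, ne_eq,
      ← map_eq_zero_iff σ hσ, ← Units.mul_left_eq_zero (α ^ n), hn, Units.mul_right_eq_zero]

theorem exists_eq_C_mul_T_of_map_eq_C_mul {G : Subgroup Aˣ}
    (hG : ∀ c : A, c ≠ 0 → (∃ u ∈ G, σ c = (u : A) * c) → IsUnit c) (hαG : α ∈ G)
    (hC : ∀ a, σ' (C a) = C (σ a)) (hT : σ' (T 1) = C (α : A) * T 1)
    (hPi : ∀ p, σ' p = p → ∃ c, σ c = c ∧ p = C c)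
    {p : A[T;T⁻¹]} {u : Aˣ} (hu : u ∈ G) (h : σ' p = C (u : A) * p) :
    ∃ (a : A) (m : ℤ), (∃ v ∈ G, σ a = v * a) ∧ p = C a * T m := by
  rcases eq_or_ne p 0 with rfl | hp
  · exact ⟨0, 0, ⟨1, one_mem G, by simp⟩, by simp⟩
  obtain ⟨N, hN⟩ : ∃ N, p.coeff N ≠ 0 := by
    by_contra! h0
    exact hp (ext fun n => by simp [h0])
  set a := p.coeff N
  set v : Aˣ := u * (α ^ N)⁻¹
  have hvG : v ∈ G := mul_mem hu (inv_mem (zpow_mem hαG N))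
  have hσa : σ a * ((α ^ N : Aˣ) : A) = u * a := by
    rw [← coeff_map_of_map_C_of_map_T_one hC hT, h, ← mul_one (C _), ← T_zero,
      coeff_C_mul_T_mul, sub_zero]
  have hσav : σ a = v * a := by
    rw [Units.val_mul, mul_right_comm, ← hσa, mul_assoc, Units.mul_inv, mul_one]
  have hq : σ' (C a * T N) = C (u : A) * (C a * T N) := by
    rw [map_C_mul_T_of_map_C_of_map_T_one hC hT, hσa, map_mul, mul_assoc]
  obtain ⟨r, hr, hpr⟩ :=
    exists_eq_fixed_mul_of_map_eq_mul σ'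
      (((hG a hN ⟨v, hvG, hσav⟩).map C).mul (isUnit_T N)) h hq
  obtain ⟨c, hc, rfl⟩ := hPi r hr
  refine ⟨c * a, N, ⟨v, hvG, by rw [map_mul, hc, hσav, mul_left_comm]⟩, ?_⟩
  rw [hpr, map_mul, mul_assoc]

end LaurentPolynomial

theorem stmt_14_general {A : Type*} [CommRing A]
    (σ : A ≃+* A) (G : Subgroup Aˣ)
    (hG : ∀ c : A, c ≠ 0 → (∃ u ∈ G, σ c = (u : A) * c) → IsUnit c)
    (α : Aˣ) (hαG : α ∈ G)
    (σ' : LaurentPolynomial A ≃+* LaurentPolynomial A)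
    (hC : ∀ a : A, σ' (LaurentPolynomial.C a) = LaurentPolynomial.C (σ a))
    (hT : σ' (LaurentPolynomial.T 1) = LaurentPolynomial.C (α : A) * LaurentPolynomial.T 1)
    (hPi : ∀ p : LaurentPolynomial A, σ' p = p → ∃ c : A, σ c = c ∧ p = LaurentPolynomial.C c) :
    ∀ p : LaurentPolynomial A,
      ((∃ (h : Aˣ) (m : ℤ), h ∈ G ∧
          σ' p = LaurentPolynomial.C (h : A) * LaurentPolynomial.T m * p)
        ↔ (∃ u ∈ G, σ' p = LaurentPolynomial.C (u : A) * p))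
      ∧ ((∃ (h : Aˣ) (m : ℤ), h ∈ G ∧
          σ' p = LaurentPolynomial.C (h : A) * LaurentPolynomial.T m * p)
        ↔ ∃ (h : A) (m : ℤ), (∃ v ∈ G, σ h = (v : A) * h) ∧
            p = LaurentPolynomial.C h * LaurentPolynomial.T m) := by
  intro p
  have hC' : ∀ a, (σ' : A[T;T⁻¹] →+* A[T;T⁻¹]) (C a) = C ((σ : A →+* A) a) := hC
  have exponent_vanishes : (∃ (h : Aˣ) (m : ℤ), h ∈ G ∧ σ' p = C (h : A) * T m * p) ↔
      ∃ u ∈ G, σ' p = C (u : A) * p := by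
    refine ⟨fun ⟨u, m, hu, h⟩ => ⟨u, hu, ?_⟩,
      fun ⟨u, hu, h⟩ => ⟨u, 0, hu, by rwa [T_zero, mul_one]⟩⟩
    rcases eq_or_ne p 0 with rfl | hp
    · simp
    · rwa [eq_zero_of_map_eq_C_mul_T_mul σ.injective hC' hT hp h, T_zero, mul_one] at h
  refine ⟨exponent_vanishes, exponent_vanishes.trans ⟨fun ⟨u, hu, h⟩ => ?_, ?_⟩⟩
  · exact exists_eq_C_mul_T_of_map_eq_C_mul hG hαG hC' hT hPi hu h
  · rintro ⟨a, m, ⟨v, hv, hσa⟩, rfl⟩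
    refine ⟨v * α ^ m, mul_mem hv (zpow_mem hαG m),
      (map_C_mul_T_of_map_C_of_map_T_one hC' hT a m).trans ?_⟩
    rw [RingEquiv.coe_toRingHom, hσa, Units.val_mul, map_mul, map_mul, map_mul]
    ring

/-- Let `(A, σ)` be a difference ring and `G ≤ Aˣ` with every
nonzero semi-constant over `G` a unit.  Let `σ'` on `A[t,t⁻¹]` extend `σ` with
`σ'(t) = α·t` for some `α ∈ G`, and assume it is a Π-extension.  With
`G̃ = {h·t^m : h ∈ G, m ∈ ℤ}` one has
`sconst_{G̃}(A[t,t⁻¹], σ') = sconst_G(A[t,t⁻¹], σ') = {h·t^m : h ∈ sconst_G(A,σ), m ∈ ℤ}`. -/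
theorem stmt_14 {A : Type*} [CommRing A] [CharZero A]
    (σ : A ≃+* A) (G : Subgroup Aˣ)
    (hG : ∀ c : A, c ≠ 0 → (∃ u ∈ G, σ c = (u : A) * c) → IsUnit c)
    (α : Aˣ) (hαG : α ∈ G)
    (σ' : LaurentPolynomial A ≃+* LaurentPolynomial A)
    (hC : ∀ a : A, σ' (LaurentPolynomial.C a) = LaurentPolynomial.C (σ a))
    (hT : σ' (LaurentPolynomial.T 1) = LaurentPolynomial.C (α : A) * LaurentPolynomial.T 1)
    (hPi : ∀ p : LaurentPolynomial A, σ' p = p → ∃ c : A, σ c = c ∧ p = LaurentPolynomial.C c) :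
    ∀ p : LaurentPolynomial A,
      ((∃ (h : Aˣ) (m : ℤ), h ∈ G ∧
          σ' p = LaurentPolynomial.C (h : A) * LaurentPolynomial.T m * p)
        ↔ (∃ u ∈ G, σ' p = LaurentPolynomial.C (u : A) * p))
      ∧ ((∃ (h : Aˣ) (m : ℤ), h ∈ G ∧
          σ' p = LaurentPolynomial.C (h : A) * LaurentPolynomial.T m * p)
        ↔ ∃ (h : A) (m : ℤ), (∃ v ∈ G, σ h = (v : A) * h) ∧
            p = LaurentPolynomial.C h * LaurentPolynomial.T m) :=
  stmt_14_general σ G hG α hαG σ' hC hT hPi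
end

section
/- Let (A, σ) be a difference ring and let G be a subgroup of the unit group Aˣ such that every nonzero element c ∈ A satisfying σ(c) = u·c for some u ∈ G is a unit of A. Let σ' be the ring automorphism of A[t] with σ'|_A = σ and σ'(t) = t + β for some β ∈ A, and assume this is a Σ-extension (const(A[t], σ') = const(A, σ)). Let f ∈ A[t] and u ∈ G. Then every solution g ∈ A[t] of σ'(g) − u·g = f satisfies deg(g) ≤ max(deg(f) + 1, 0). -/
/-!
Suppose `deg g = m + 1 > max (deg f + 1) 0`. Since `σ'` acts as `σ` on coefficients followed by
the Taylor shift `t ↦ t + β`, comparing the coefficients of `t^(m+1)` and `t^m` in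
`σ'(g) - u g = f` gives `σ(g_{m+1}) = u g_{m+1}` and `σ(g_m) = u (g_m - (m+1) g_{m+1} β)`.
So `w = (m+1) g_{m+1}` is a nonzero semi-constant, hence a unit, and `c = g_m / w` satisfies
`σ(c) = c - β`. Then `t + c` is a nonconstant constant of `σ'`, contradicting the Σ-extension
property.
-/

open Polynomial

namespace Polynomial

lemma coeff_taylor_of_natDegree_le {R : Type*} [CommSemiring R] {f : R[X]} {n : ℕ}
    (r : R) (hf : f.natDegree ≤ n) : (taylor r f).coeff n = f.coeff n := by
  have hconst : (hasseDeriv n f).natDegree ≤ 0 :=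
    (natDegree_hasseDeriv_le f n).trans (by omega)
  rw [taylor_coeff, eq_C_of_natDegree_le_zero hconst]
  simp [hasseDeriv_coeff]

lemma coeff_taylor_of_natDegree_le_succ {R : Type*} [CommSemiring R] {f : R[X]} {m : ℕ}
    (r : R) (hf : f.natDegree ≤ m + 1) :
    (taylor r f).coeff m = f.coeff m + (m + 1) * f.coeff (m + 1) * r := by
  have hlin : (hasseDeriv m f).natDegree ≤ 1 :=
    (natDegree_hasseDeriv_le f m).trans (by omega)
  rw [taylor_coeff, eq_X_add_C_of_natDegree_le_one hlin]
  simp [hasseDeriv_coeff, Nat.choose_succ_self_right, add_comm 1 m]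
  ring

lemma ringHom_apply_eq_taylor_map {R : Type*} [CommSemiring R] (σ : R →+* R) (β : R)
    (φ : R[X] →+* R[X]) (hC : ∀ a, φ (C a) = C (σ a)) (hX : φ X = X + C β) (p : R[X]) :
    φ p = taylor β (p.map σ) := by
  have : φ = (taylorAlgHom β).toRingHom.comp (mapRingHom σ) :=
    ringHom_ext (fun a => by simp [hC]) (by simp [hX])
  rw [this]
  rfl

lemma exists_natDegree_eq_succ_of_max_lt {R : Type*} [Semiring R] {f g : R[X]}
    (h : max (f.degree + 1) 0 < g.degree) : ∃ m : ℕ, g.natDegree = m + 1 ∧ f.degree < m := by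
  have hg : g ≠ 0 := by rintro rfl; simp at h
  rw [degree_eq_natDegree hg, max_lt_iff] at h
  obtain ⟨m, hm⟩ := Nat.exists_eq_succ_of_ne_zero (by exact_mod_cast h.2.ne' : g.natDegree ≠ 0)
  refine ⟨m, hm, ?_⟩
  rw [hm, Nat.cast_succ] at h
  exact (WithBot.add_lt_add_iff_right WithBot.one_ne_bot).mp h.1

end Polynomial

section DifferenceRing

variable {A : Type*} [CommRing A]

lemma map_inv_mul_eq_sub (σ : A →+* A) {u v : Aˣ} {a β : A} (hv : σ v = u * v)
    (ha : σ a = u * (a - v * β)) : σ (↑v⁻¹ * a) = ↑v⁻¹ * a - β := by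
  have hcv : ↑v⁻¹ * a * v = a := by rw [mul_right_comm, Units.inv_mul, one_mul]
  apply (u * v).mul_left_inj.mp
  calc σ (↑v⁻¹ * a) * ↑(u * v) = σ (↑v⁻¹ * a * v) := by rw [map_mul _ _ (v : A), hv, Units.val_mul]
    _ = (↑v⁻¹ * a - β) * ↑(u * v) := by
      rw [hcv, ha, Units.val_mul]
      linear_combination (-(u : A) * a) * Units.inv_mul v

lemma apply_ne_sub_of_fixed_eq_C [Nontrivial A] (σ : A →+* A) {β : A} (σ' : A[X] →+* A[X])
    (hC : ∀ a, σ' (C a) = C (σ a)) (hX : σ' X = X + C β)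
    (hfixed : ∀ p, σ' p = p → ∃ c, p = C c) (c : A) : σ c ≠ c - β := by
  intro hc
  obtain ⟨c₀, hc₀⟩ := hfixed (X + C c) (by rw [map_add, hX, hC, hc, C_sub]; ring)
  exact one_ne_zero (by simpa using congrArg (coeff · 1) hc₀ : (1 : A) = 0)

lemma map_coeff_of_taylor_map_sub_C_mul_eq (σ : A →+* A) (β u : A) {f g : A[X]} {m : ℕ}
    (hg : g.natDegree ≤ m + 1) (hf : f.degree < m) (h : taylor β (g.map σ) - C u * g = f) :
    σ (g.coeff (m + 1)) = u * g.coeff (m + 1) ∧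
      σ (g.coeff m) = u * (g.coeff m - (m + 1) * g.coeff (m + 1) * β) := by
  have hmap : (g.map σ).natDegree ≤ m + 1 := natDegree_map_le.trans hg
  have htop := congrArg (coeff · (m + 1)) h
  have hnext := congrArg (coeff · m) h
  simp only [coeff_sub, coeff_C_mul, coeff_taylor_of_natDegree_le β hmap,
    coeff_taylor_of_natDegree_le_succ β hmap, coeff_map, coeff_eq_zero_of_degree_lt hf,
    coeff_eq_zero_of_degree_lt (hf.trans (by exact_mod_cast m.lt_succ_self))] at htop hnext
  rw [sub_eq_zero] at htop
  rw [htop] at hnext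
  exact ⟨htop, by linear_combination hnext⟩

end DifferenceRing

/-- Let `(A, σ)` be a difference ring and `G ≤ Aˣ` with every
nonzero semi-constant over `G` a unit.  Let `σ'` on `A[t]` extend `σ` with
`σ'(t) = t + β` and be a Σ-extension.  For `f ∈ A[t]` and `u ∈ G`, every solution
`g ∈ A[t]` of `σ'(g) − u·g = f` satisfies `deg(g) ≤ max(deg(f) + 1, 0)`. -/
theorem stmt_19 {A : Type*} [CommRing A] [CharZero A]
    (σ : A ≃+* A) (G : Subgroup Aˣ)
    (hG : ∀ c : A, c ≠ 0 → (∃ u ∈ G, σ c = (u : A) * c) → IsUnit c)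
    (β : A)
    (σ' : Polynomial A ≃+* Polynomial A)
    (hC : ∀ a : A, σ' (Polynomial.C a) = Polynomial.C (σ a))
    (hX : σ' Polynomial.X = Polynomial.X + Polynomial.C β)
    (hSigma : ∀ p : Polynomial A, σ' p = p → ∃ c : A, σ c = c ∧ p = Polynomial.C c)
    (f : Polynomial A) (u : Aˣ) (hu : u ∈ G) :
    ∀ g : Polynomial A, σ' g - Polynomial.C (u : A) * g = f →
      g.degree ≤ max (f.degree + 1) 0 := by
  intro g hg
  by_contra! hdeg
  obtain ⟨m, hgm, hfm⟩ := exists_natDegree_eq_succ_of_max_lt hdeg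
  have hσ' : σ' g = taylor β (g.map (σ : A →+* A)) :=
    ringHom_apply_eq_taylor_map (σ : A →+* A) β (σ' : A[X] →+* A[X]) hC hX g
  obtain ⟨htop, hnext⟩ :=
    map_coeff_of_taylor_map_sub_C_mul_eq (σ : A →+* A) β u hgm.le hfm (hσ' ▸ hg)
  replace htop : σ (g.coeff (m + 1)) = u * g.coeff (m + 1) := htop
  have hlead : IsUnit (g.coeff (m + 1)) :=
    hG _ (by simpa [← hgm] using hdeg.ne_bot) ⟨u, hu, htop⟩
  have hw : σ ((m + 1) * g.coeff (m + 1)) = u * ((m + 1) * g.coeff (m + 1)) := by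
    simp only [map_mul, map_add, map_natCast, map_one, htop]
    ring
  obtain ⟨v, hv⟩ := hG _ (hlead.mul_left_eq_zero.not.mpr (Nat.cast_add_one_ne_zero m))
    ⟨u, hu, hw⟩
  rw [← hv] at hw hnext
  exact apply_ne_sub_of_fixed_eq_C σ σ' hC hX (fun p hp => (hSigma p hp).imp fun _ => And.right)
    _ (map_inv_mul_eq_sub (σ : A →+* A) hw hnext)
end
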